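/- Let n ≥ 0, 0 ≤ k ≤ n+1, and r ≥ 0. The pullback map Φ^* restricts to a linear isomorphism from P_rΛ^k(ℝ^{n+1}) onto P_{2r+k}Λ^k_e(ℝ^{n+1}), the space of even forms in P_{2r+k}Λ^k(ℝ^{n+1}). -/

import Mathlib

open scoped BigOperators
open MeasureTheory

noncomputable section

/-- Vectors in `ℝ^m`. -/
abbrev Vec (m : ℕ) := Fin m → ℝ

/-- Differential `k`-forms on `ℝ^m`, given pointwise as alternating `k`-tensors. -/
abbrev Form (m k : ℕ) := Vec m → (Vec m [⋀^Fin k]→ₗ[ℝ] ℝ)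

/-- A multivariate polynomial has (total) degree at most `r : ℤ`. -/
def degLE {m : ℕ} (r : ℤ) (p : MvPolynomial (Fin m) ℝ) : Prop :=
  ∀ d ∈ p.support, ((d.sum fun _ e => e : ℕ) : ℤ) ≤ r

/-- `P_rΛ^k(ℝ^m)`: differential `k`-forms with polynomial coefficients of degree at most `r`. -/
def PL (m k : ℕ) (r : ℤ) : Set (Form m k) :=
  {α | ∀ v : Fin k → Vec m, ∃ p : MvPolynomial (Fin m) ℝ,
      degLE r p ∧ ∀ x, α x v = MvPolynomial.eval x p}

/-- Interior product with the radial vector field `X = Σ xᵢ ∂/∂xᵢ`. -/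
def iU {m k : ℕ} (β : Form m (k + 1)) : Form m k := fun x => (β x).curryLeft x

/-- `P_r⁻Λ^k(ℝ^m) := i_X P_{r-1}Λ^{k+1}(ℝ^m)`. -/
def PLm (m k : ℕ) (r : ℤ) : Set (Form m k) := iU '' PL m (k + 1) (r - 1)

/-- The reflection negating the `i`-th coordinate, as a map. -/
def reflFun (m : ℕ) (i : Fin m) (u : Vec m) : Vec m := fun j => if j = i then -u j else u j

/-- The reflection negating the `i`-th coordinate, as a linear map. -/
def reflLin (m : ℕ) (i : Fin m) : Vec m →ₗ[ℝ] Vec m :=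
  LinearMap.pi fun j => if j = i then -LinearMap.proj j else LinearMap.proj j

/-- Pullback of an ambient form along the reflection `R_i`. -/
def reflPull (m k : ℕ) (i : Fin m) (α : Form m k) : Form m k :=
  fun x => (α (reflFun m i x)).compLinearMap (reflLin m i)

/-- A form on `ℝ^m` is even if it is invariant under all coordinate reflections. -/
def IsEven (m k : ℕ) (α : Form m k) : Prop := ∀ i, reflPull m k i α = α

/-- A form on `ℝ^m` is odd if every coordinate reflection negates it. -/
def IsOdd (m k : ℕ) (α : Form m k) : Prop := ∀ i, reflPull m k i α = -α

/-- The map `Φ(u) = (u₁², …, u_m²)`. -/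
def Phi (m : ℕ) (u : Vec m) : Vec m := fun i => u i ^ 2

/-- The differential of `Φ` at `u`. -/
def dPhi (m : ℕ) (u : Vec m) : Vec m →ₗ[ℝ] Vec m :=
  LinearMap.pi fun i => (2 * u i) • LinearMap.proj i

/-- Pullback of ambient forms along `Φ`. -/
def phiPull (m k : ℕ) (α : Form m k) : Form m k :=
  fun u => (α (Phi m u)).compLinearMap (dPhi m u)

/-- The standard simplex `T^{m-1} ⊂ ℝ^m`. -/
def simplexSet (m : ℕ) : Set (Vec m) := {x | (∀ i, 0 ≤ x i) ∧ ∑ i, x i = 1}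

/-- The unit sphere `S^{m-1} ⊂ ℝ^m`. -/
def sphereSet (m : ℕ) : Set (Vec m) := {u | ∑ i, u i ^ 2 = 1}

/-- The linear functional `v ↦ ⟨u, v⟩`. -/
def dotLin (m : ℕ) (u : Vec m) : Vec m →ₗ[ℝ] ℝ := ∑ i, u i • LinearMap.proj i

/-- Orthogonal projection onto the tangent space of the sphere at `u`. -/
def projSph (m : ℕ) (u : Vec m) : Vec m →ₗ[ℝ] Vec m :=
  LinearMap.id - (dotLin m u).smulRight u

/-- The linear functional `v ↦ Σ vᵢ`. -/
def sumLin (m : ℕ) : Vec m →ₗ[ℝ] ℝ := ∑ i, LinearMap.proj i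

/-- Orthogonal projection onto the tangent hyperplane `{Σ vᵢ = 0}` of the simplex. -/
def projSim (m : ℕ) : Vec m →ₗ[ℝ] Vec m :=
  LinearMap.id - ((m : ℝ)⁻¹ • sumLin m).smulRight (fun _ => 1)

/-- Differential `k`-forms on a subset `M ⊆ ℝ^m`, encoded at each point by the canonical
alternating tensor on `ℝ^m` that vanishes in the directions normal to `M` (i.e. the
pullback along the inclusion, extended by the tangent projection). -/
abbrev FormOn (m : ℕ) (M : Set (Vec m)) (k : ℕ) := M → (Vec m [⋀^Fin k]→ₗ[ℝ] ℝ)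

/-- Restriction (pullback along the inclusion) of an ambient form to the simplex. -/
def resSim (m k : ℕ) (α : Form m k) : FormOn m (simplexSet m) k :=
  fun x => (α x.1).compLinearMap (projSim m)

/-- Restriction (pullback along the inclusion) of an ambient form to the sphere. -/
def resSph (m k : ℕ) (α : Form m k) : FormOn m (sphereSet m) k :=
  fun u => (α u.1).compLinearMap (projSph m u.1)

/-- `P_rΛ^k(T^{m-1})`. -/
def PLsim (m k : ℕ) (r : ℤ) : Set (FormOn m (simplexSet m) k) := resSim m k '' PL m k r

/-- `P_rΛ^k(S^{m-1})`. -/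
def PLsph (m k : ℕ) (r : ℤ) : Set (FormOn m (sphereSet m) k) := resSph m k '' PL m k r

/-- `P_r⁻Λ^k(T^{m-1})`. -/
def PLmsim (m k : ℕ) (r : ℤ) : Set (FormOn m (simplexSet m) k) := resSim m k '' PLm m k r

/-- `P_r⁻Λ^k(S^{m-1})`. -/
def PLmsph (m k : ℕ) (r : ℤ) : Set (FormOn m (sphereSet m) k) := resSph m k '' PLm m k r

lemma phi_mem_simplex {m : ℕ} {u : Vec m} (hu : u ∈ sphereSet m) :
    Phi m u ∈ simplexSet m :=
  ⟨fun _ => sq_nonneg _, hu⟩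

/-- Pullback `Φ^* : Λ^k(T^{m-1}) → Λ^k(S^{m-1})` along `Φ : S^{m-1} → T^{m-1}`. -/
def phiPullTS (m k : ℕ) (a : FormOn m (simplexSet m) k) : FormOn m (sphereSet m) k :=
  fun u => (a ⟨Phi m u.1, phi_mem_simplex u.2⟩).compLinearMap
    ((dPhi m u.1).comp (projSph m u.1))

lemma refl_mem_sphere {m : ℕ} {i : Fin m} {u : Vec m} (hu : u ∈ sphereSet m) :
    reflFun m i u ∈ sphereSet m := by
  have : ∀ j, (reflFun m i u j) ^ 2 = u j ^ 2 := by
    intro j; simp only [reflFun]; split <;> ring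
  simpa only [sphereSet, Set.mem_setOf_eq, this] using hu

/-- Pullback of a form on the sphere along the reflection `R_i`. -/
def reflPullSph (m k : ℕ) (i : Fin m) (α : FormOn m (sphereSet m) k) :
    FormOn m (sphereSet m) k :=
  fun u => (α ⟨reflFun m i u.1, refl_mem_sphere u.2⟩).compLinearMap (reflLin m i)

/-- A form on the sphere is even if it is invariant under all coordinate reflections. -/
def IsEvenSph (m k : ℕ) (α : FormOn m (sphereSet m) k) : Prop :=
  ∀ i, reflPullSph m k i α = α

/-- A form on the sphere is odd if every coordinate reflection negates it. -/
def IsOddSph (m k : ℕ) (α : FormOn m (sphereSet m) k) : Prop :=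
  ∀ i, reflPullSph m k i α = -α

/-- The bubble function `u_N = u₁ ⋯ u_m`. -/
def bubble (m : ℕ) (u : Vec m) : ℝ := ∏ i, u i

/-- Multiplication of a form on the sphere by the bubble function. -/
def bubbleSmul (m k : ℕ) (α : FormOn m (sphereSet m) k) : FormOn m (sphereSet m) k :=
  fun u => bubble m u.1 • α u

/-- Multiplication of an ambient form by the bubble function. -/
def bubbleSmulAmb (m k : ℕ) (α : Form m k) : Form m k :=
  fun u => bubble m u • α u

/-- The standard volume form on `ℝ^m`. -/
def volForm (m : ℕ) : (Vec m) [⋀^Fin m]→ₗ[ℝ] ℝ := (Pi.basisFun ℝ (Fin m)).det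

/-- Iterated interior product: insert the vectors `v 0, …, v (k-1)` into the
first `k` slots of an alternating `(k+j)`-tensor. -/
def contrMany {m : ℕ} : (k : ℕ) → (Fin k → Vec m) → {j : ℕ} →
    ((Vec m) [⋀^Fin (k + j)]→ₗ[ℝ] ℝ) → ((Vec m) [⋀^Fin j]→ₗ[ℝ] ℝ)
  | 0, _, j, α => α.domDomCongr (finCongr (Nat.zero_add j))
  | (k + 1), v, j, α =>
      contrMany k (fun i => v i.succ)
        ((α.domDomCongr (finCongr (by omega : (k + 1) + j = (k + j) + 1))).curryLeft (v 0))

/-- The Hodge star on alternating tensors on `ℝ^m` (standard metric and orientation):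
`(⋆α)(w₁,…,w_{m-k}) = (1/k!) Σ_g α(e_{g 0},…,e_{g(k-1)}) vol(e_{g 0},…,e_{g(k-1)},w₁,…,w_{m-k})`. -/
def starAlt (m k : ℕ) (α : (Vec m) [⋀^Fin k]→ₗ[ℝ] ℝ) : (Vec m) [⋀^Fin (m - k)]→ₗ[ℝ] ℝ :=
  if h : k ≤ m then
    (k.factorial : ℝ)⁻¹ •
      ∑ g : Fin k → Fin m,
        α (fun i => Pi.single (g i) 1) •
          contrMany k (fun i => Pi.single (g i) 1)
            ((volForm m).domDomCongr (finCongr (by omega : m = k + (m - k))))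
  else 0

/-- The Hodge star `⋆_{ℝ^m}` applied pointwise to ambient forms. -/
def starR (m k : ℕ) (α : Form m k) : Form m (m - k) := fun x => starAlt m k (α x)

/-- The wedge product of alternating tensors. -/
def wedgeAlt {m k l : ℕ} (α : (Vec m) [⋀^Fin k]→ₗ[ℝ] ℝ) (β : (Vec m) [⋀^Fin l]→ₗ[ℝ] ℝ) :
    (Vec m) [⋀^Fin (k + l)]→ₗ[ℝ] ℝ :=
  ((TensorProduct.lid ℝ ℝ).toLinearMap.compAlternatingMap (α.domCoprod β)).domDomCongr
    finSumFinEquiv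

/-- The conormal `ν = Σ uᵢ duᵢ` at `u`, as an alternating 1-tensor. -/
def nuForm (m : ℕ) (u : Vec m) : (Vec m) [⋀^Fin 1]→ₗ[ℝ] ℝ :=
  AlternatingMap.ofSubsingleton ℝ (Vec m) ℝ (0 : Fin 1) (dotLin m u)

/-- The extended Hodge star `⋆_{S^{m-1}} α := ⋆_{ℝ^m}(ν ∧ α)` on ambient forms. -/
def starSphAmb (m k : ℕ) (α : Form m k) : Form m (m - (1 + k)) :=
  fun x => starAlt m (1 + k) (wedgeAlt (nuForm m x) (α x))

/-- The Hodge star of a form on the sphere (w.r.t. the round metric and the orientation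
induced by the outward normal), computed as the restriction of `⋆_{ℝ^m}(ν ∧ ·)`. -/
def starSph (m k : ℕ) (α : FormOn m (sphereSet m) k) :
    FormOn m (sphereSet m) (m - (1 + k)) :=
  fun u => (starAlt m (1 + k) (wedgeAlt (nuForm m u.1) (α u))).compLinearMap (projSph m u.1)

/-- Re-indexing a form along an equality of form degrees. -/
def castForm {m k l : ℕ} (h : k = l) (α : Form m k) : Form m l :=
  fun x => (α x).domDomCongr (finCongr h)

/-- Re-indexing a form on a subset along an equality of form degrees. -/
def castFormOn {m : ℕ} {M : Set (Vec m)} {k l : ℕ} (h : k = l) (α : FormOn m M k) :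
    FormOn m M l :=
  fun x => (α x).domDomCongr (finCongr h)

/-- Trace on the boundary of the simplex vanishes: at every boundary point (a point of some
face `xᵢ = 0`), the form vanishes on vectors tangent to that face. -/
def vanishBdry (m k : ℕ) (a : FormOn m (simplexSet m) k) : Prop :=
  ∀ (x : simplexSet m) (i : Fin m), x.1 i = 0 →
    ∀ v : Fin k → Vec m, (∀ j, (∑ l, v j l) = 0 ∧ v j i = 0) → a x v = 0

/-- `P̊_rΛ^k(T^{m-1})`: forms in `P_rΛ^k(T^{m-1})` with vanishing trace on the boundary. -/
def PLosim (m k : ℕ) (r : ℤ) : Set (FormOn m (simplexSet m) k) :=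
  {a ∈ PLsim m k r | vanishBdry m k a}

/-- `P̊_r⁻Λ^k(T^{m-1})`. -/
def PLmosim (m k : ℕ) (r : ℤ) : Set (FormOn m (simplexSet m) k) :=
  {a ∈ PLmsim m k r | vanishBdry m k a}

/-- A form on the sphere vanishes (as an alternating tensor on the tangent space)
at every point of `S^{m-1} ∩ Γ`, where `Γ = ∪ᵢ {uᵢ = 0}`. -/
def zeroOnGammaSph (m k : ℕ) (α : FormOn m (sphereSet m) k) : Prop :=
  ∀ u : sphereSet m, (∃ i, u.1 i = 0) →
    ∀ v : Fin k → Vec m, (∀ j, ∑ l, u.1 l * v j l = 0) → α u v = 0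

/-- An ambient form vanishes (as an alternating tensor) at every point of `Γ`. -/
def zeroOnGammaAmb (m k : ℕ) (α : Form m k) : Prop :=
  ∀ u : Vec m, (∃ i, u i = 0) → α u = 0

/-- The wedge product of forms on a subset. -/
def wedgeOn {m : ℕ} {M : Set (Vec m)} {k l : ℕ} (a : FormOn m M k) (b : FormOn m M l) :
    FormOn m M (k + l) :=
  fun x => wedgeAlt (a x) (b x)

/-- The base region of the parametrization of the simplex. -/
def baseSimplex (n : ℕ) : Set (Fin n → ℝ) := {y | (∀ j, 0 ≤ y j) ∧ ∑ j, y j ≤ 1}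

/-- Parametrization `y ↦ (1 - Σy, y)` of `T^n` over the base region. -/
def simplexParam (n : ℕ) (y : Fin n → ℝ) : Vec (n + 1) := Fin.cons (1 - ∑ j, y j) y

lemma simplexParam_mem {n : ℕ} {y : Fin n → ℝ} (h : y ∈ baseSimplex n) :
    simplexParam n y ∈ simplexSet (n + 1) := by
  constructor
  · intro i
    refine Fin.cases ?_ ?_ i
    · simpa [simplexParam] using sub_nonneg.mpr h.2
    · intro j; simpa [simplexParam] using h.1 j
  · simp [simplexParam, Fin.sum_cons]

/-- The coordinate tangent vectors `∂x/∂y_j = e_{j+1} - e_0` of the parametrization,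
a positively oriented frame for the orientation of `T^n` induced from the outward-normal
orientation of `S^n` via `Φ`. -/
def simplexTangent (n : ℕ) (j : Fin n) : Vec (n + 1) :=
  Fin.cons (-1) (Pi.single j 1)

open Classical in
/-- The integral of an `n`-form over the oriented simplex `T^n`. -/
def integralSimplex (n : ℕ) (ω : FormOn (n + 1) (simplexSet (n + 1)) n) : ℝ :=
  ∫ y : Fin n → ℝ,
    if h : y ∈ baseSimplex n then ω ⟨simplexParam n y, simplexParam_mem h⟩ (simplexTangent n)
    else 0

/-- Forms on a subset that genuinely are pullbacks to the simplex: they vanish in the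
normal directions (canonical representatives). -/
def TangentialSim (m k : ℕ) (a : FormOn m (simplexSet m) k) : Prop :=
  ∀ x, (a x).compLinearMap (projSim m) = a x

/-- Continuity of a form on a subset. -/
def ContFormOn (m : ℕ) (M : Set (Vec m)) (k : ℕ) (a : FormOn m M k) : Prop :=
  ∀ v : Fin k → Vec m, Continuous fun x : M => a x v

/-- The Riemannian volume form of the round sphere `S^{m-1}` (outward-normal orientation),
i.e. the restriction of `⋆_{ℝ^m} ν`. -/
def volSph (m : ℕ) : FormOn m (sphereSet m) (m - 1) :=
  fun u => (starAlt m 1 (nuForm m u.1)).compLinearMap (projSph m u.1)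



/-!
In coordinates, the `dx_g` component of `Φ^*α` is `2^k u_g · p_g(u²)`, where `u_g = ∏ⱼ u_{g j}`
and `p_g` is the `dx_g` component of `α`; so `Φ^*α` is even of degree at most `2r + k`.
Conversely, for an even `β` each reflection `R_i` multiplies the component `β(e_g)` by `-1`
exactly when `i` is an index of `g`, so every monomial of that component has exponent
`𝟙_{range g} + 2d`; hence `β(e_g) = u_g · q_g(u²)` with `deg q_g ≤ r`, and the `q_g` assemble
to a preimage. Injectivity holds because `dΦ_u` is invertible when no `u_i` vanishes, so two
preimages agree on the open positive orthant, where polynomials are determined.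
-/

open MvPolynomial

variable {m k : ℕ}

lemma degLE_natCast_iff {r : ℕ} {p : MvPolynomial (Fin m) ℝ} :
    degLE r p ↔ p.totalDegree ≤ r := by
  simp only [degLE, totalDegree, Finset.sup_le_iff, Nat.cast_le]

theorem AlternatingMap.sum_apply {R M N ι α : Type*} [CommSemiring R] [AddCommMonoid M]
    [Module R M] [AddCommMonoid N] [Module R N] (f : α → M [⋀^ι]→ₗ[R] N) (s : Finset α)
    (v : ι → M) : (∑ a ∈ s, f a) v = ∑ a ∈ s, f a v := by
  have := congrArg (· v) (map_sum (AlternatingMap.toMultilinearMapLM (S := R)) f s)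
  simp only [_root_.sum_apply] at this
  exact this

def basisTuple (g : Fin k → Fin m) : Fin k → Vec m := fun j => Pi.single (g j) 1

/-- The coordinate covector `dx_{g 0} ∧ ⋯ ∧ dx_{g (k-1)}`. -/
def dx (g : Fin k → Fin m) : Vec m [⋀^Fin k]→ₗ[ℝ] ℝ :=
  Matrix.detRowAlternating.compLinearMap (LinearMap.funLeft ℝ ℝ g)

lemma dx_apply (g : Fin k → Fin m) (v : Fin k → Vec m) :
    dx g v = (Matrix.of fun j j' => v j (g j')).det := rfl

lemma AlternatingMap.apply_eq_sum_basisTuple (ω : Vec m [⋀^Fin k]→ₗ[ℝ] ℝ)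
    (v : Fin k → Vec m) :
    ω v = ∑ g : Fin k → Fin m, (∏ j, v j (g j)) * ω (basisTuple g) := by
  have hv : v = fun j => ∑ i, v j i • (Pi.single i 1 : Vec m) :=
    funext fun j => pi_eq_sum_univ' (v j)
  calc ω v = ω.toMultilinearMap (fun j => ∑ i, v j i • (Pi.single i 1 : Vec m)) := by
        rw [← hv]; rfl
    _ = _ := by
      rw [MultilinearMap.map_sum]
      refine Finset.sum_congr rfl fun g _ => ?_
      simpa [basisTuple] using
        ω.toMultilinearMap.map_smul_univ (fun j => v j (g j)) (basisTuple g)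

lemma AlternatingMap.sum_basisTuple_smul_dx (ω : Vec m [⋀^Fin k]→ₗ[ℝ] ℝ) :
    ∑ g : Fin k → Fin m, ω (basisTuple g) • dx g = (k.factorial : ℝ) • ω := by
  ext v
  have hsign : ∀ σ : Equiv.Perm (Fin k),
      ∑ g : Fin k → Fin m, ω (basisTuple g) * ∏ j, v (σ j) (g j) = σ.sign * ω v := by
    intro σ
    rw [← zsmul_eq_mul, ← Units.smul_def, ← ω.map_perm v σ]
    simp_rw [mul_comm (ω _)]
    exact (ω.apply_eq_sum_basisTuple (v ∘ σ)).symm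
  simp only [AlternatingMap.sum_apply, AlternatingMap.smul_apply, smul_eq_mul,
    dx_apply, Matrix.det_apply, Matrix.of_apply, Finset.mul_sum]
  rw [Finset.sum_comm]
  calc ∑ σ : Equiv.Perm (Fin k), ∑ g, ω (basisTuple g) * σ.sign • ∏ j, v (σ j) (g j)
      = ∑ σ : Equiv.Perm (Fin k), ((σ.sign : ℤ) : ℝ) * ((σ.sign : ℤ) : ℝ) * ω v := by
        refine Finset.sum_congr rfl fun σ _ => ?_
        simp_rw [Units.smul_def, zsmul_eq_mul, mul_left_comm _ ((σ.sign : ℤ) : ℝ),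
          ← Finset.mul_sum, hsign, mul_assoc]
    _ = k.factorial * ω v := by
        simp [← Int.cast_mul, ← Units.val_mul, Int.units_mul_self, Fintype.card_perm]

lemma sum_smul_mem_PL {ι : Type*} [Fintype ι] {r : ℕ} (q : ι → MvPolynomial (Fin m) ℝ)
    (ω : ι → Vec m [⋀^Fin k]→ₗ[ℝ] ℝ) (hq : ∀ i, (q i).totalDegree ≤ r) :
    (fun y => ∑ i, eval y (q i) • ω i) ∈ PL m k r := by
  intro v
  refine ⟨∑ i, ω i v • q i, degLE_natCast_iff.2 ?_, fun y => ?_⟩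
  · exact totalDegree_finsetSum_le fun i _ => (totalDegree_smul_le _ _).trans (hq i)
  · simp [AlternatingMap.sum_apply, map_sum, mul_comm]

lemma mem_PL_of_basisTuple {α : Form m k} {r : ℕ}
    (h : ∀ g : Fin k → Fin m, ∃ p : MvPolynomial (Fin m) ℝ,
      p.totalDegree ≤ r ∧ ∀ y, α y (basisTuple g) = eval y p) :
    α ∈ PL m k r := by
  choose p hp hpα using h
  have hα : α = fun y => ∑ g, eval y (p g) • ((k.factorial : ℝ)⁻¹ • dx g) := by
    funext y
    simp_rw [← hpα, smul_comm _ (k.factorial : ℝ)⁻¹, ← Finset.smul_sum,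
      (α y).sum_basisTuple_smul_dx,
      inv_smul_smul₀ (by positivity : (k.factorial : ℝ) ≠ 0)]
  rw [hα]
  exact sum_smul_mem_PL _ _ hp

lemma reflLin_single (i l : Fin m) :
    reflLin m i (Pi.single l 1) = (if l = i then -1 else 1 : ℝ) • Pi.single l 1 := by
  funext j
  by_cases hj : j = l
  · subst hj; by_cases h : j = i <;> simp [reflLin, h]
  · by_cases h : j = i
    · subst h; simp [reflLin, hj, Ne.symm hj]
    · simp [reflLin, h, hj]

lemma Phi_reflFun (i : Fin m) (x : Vec m) : Phi m (reflFun m i x) = Phi m x := by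
  funext l
  simp only [Phi, reflFun]
  split_ifs <;> ring

lemma dPhi_apply (u w : Vec m) (i : Fin m) : dPhi m u w i = 2 * u i * w i := rfl

lemma dPhi_single (u : Vec m) (l : Fin m) :
    dPhi m u (Pi.single l 1) = (2 * u l) • Pi.single l 1 := by
  funext j
  by_cases hj : j = l
  · subst hj; simp [dPhi_apply]
  · simp [dPhi_apply, hj]

lemma dPhi_reflFun_comp_reflLin (i : Fin m) (x : Vec m) :
    (dPhi m (reflFun m i x)).comp (reflLin m i) = dPhi m x := by
  ext w j
  simp only [LinearMap.comp_apply, dPhi_apply, reflFun, reflLin]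
  split_ifs <;> simp [*]

lemma phiPull_apply (α : Form m k) (u : Vec m) (v : Fin k → Vec m) :
    phiPull m k α u v = α (Phi m u) (fun j => dPhi m u (v j)) := rfl

lemma isEven_phiPull (α : Form m k) : IsEven m k (phiPull m k α) := by
  intro i
  funext x
  ext v
  simp only [reflPull, phiPull, AlternatingMap.compLinearMap_apply, Phi_reflFun]
  congr 1
  funext j
  exact LinearMap.congr_fun (dPhi_reflFun_comp_reflLin i x) (v j)

lemma phiPull_basisTuple (α : Form m k) (u : Vec m) (g : Fin k → Fin m) :
    phiPull m k α u (basisTuple g) = (∏ j, 2 * u (g j)) * α (Phi m u) (basisTuple g) := by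
  rw [phiPull_apply, ← smul_eq_mul, ← AlternatingMap.map_smul_univ]
  simp only [basisTuple, dPhi_single]

lemma dx_dPhi (g : Fin k → Fin m) (u : Vec m) (v : Fin k → Vec m) :
    dx g (fun j => dPhi m u (v j)) = (∏ j, 2 * u (g j)) * dx g v := by
  simp only [dx_apply, dPhi_apply, ← Matrix.det_mul_row]
  rfl

lemma phiPull_add (a b : Form m k) : phiPull m k (a + b) = phiPull m k a + phiPull m k b := rfl

lemma phiPull_smul (c : ℝ) (a : Form m k) : phiPull m k (c • a) = c • phiPull m k a := rfl

lemma phiPull_mem_PL {α : Form m k} {r : ℕ} (hα : α ∈ PL m k r) :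
    phiPull m k α ∈ PL m k (2 * r + k) := by
  have hdeg : (2 * r + k : ℤ) = ((k + 2 * r : ℕ) : ℤ) := by push_cast; ring
  rw [hdeg]
  refine mem_PL_of_basisTuple fun g => ?_
  obtain ⟨p, hp, hpα⟩ := hα (basisTuple g)
  refine ⟨(∏ j, (C 2 * X (g j))) * expand 2 p, ?_, fun u => ?_⟩
  · refine (totalDegree_mul _ _).trans (add_le_add ?_ ?_)
    · refine (totalDegree_finsetProd _ _).trans ?_
      refine (Finset.sum_le_sum fun j _ => show _ ≤ 1 from ?_).trans_eq (by simp)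
      exact (totalDegree_mul _ _).trans (by simp [totalDegree_C, totalDegree_X])
    · rw [totalDegree_expand, mul_comm]
      exact Nat.mul_le_mul_left 2 (degLE_natCast_iff.1 hp)
  · simp only [phiPull_basisTuple, hpα, map_mul, map_prod, eval_C, eval_X, eval_expand]
    rfl

lemma dPhi_surjective {u : Vec m} (hu : ∀ i, u i ≠ 0) : Function.Surjective (dPhi m u) :=
  fun w => ⟨fun i => w i / (2 * u i), funext fun i => by
    rw [dPhi_apply]; field_simp [hu i]⟩

lemma Phi_sqrt {y : Vec m} (hy : ∀ i, 0 ≤ y i) : Phi m (fun i => √(y i)) = y :=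
  funext fun i => Real.sq_sqrt (hy i)

lemma phiPull_injOn (r : ℤ) : Set.InjOn (phiPull m k) (PL m k r) := by
  intro a ha b hb hab
  funext x
  ext v
  obtain ⟨p, -, hpa⟩ := ha v
  obtain ⟨q, -, hqb⟩ := hb v
  suffices p = q by rw [hpa, hqb, this]
  refine funext_set (fun _ => Set.Ioi 0) (fun _ => Set.Ioi_infinite 0) fun y hy => ?_
  have hy : ∀ i, 0 < y i := fun i => hy i trivial
  have hsqrt : ∀ i, √(y i) ≠ 0 := fun i => (Real.sqrt_pos.2 (hy i)).ne'
  have hab' : a (Phi m _) = b (Phi m _) :=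
    AlternatingMap.compLinearMap_injective _ (dPhi_surjective hsqrt) (congrFun hab _)
  rw [Phi_sqrt fun i => (hy i).le] at hab'
  rw [← hpa, ← hqb, hab']

def reflPoly (i : Fin m) (p : MvPolynomial (Fin m) ℝ) : MvPolynomial (Fin m) ℝ :=
  ∑ d ∈ p.support, monomial d ((-1) ^ d i * coeff d p)

lemma eval_reflPoly (i : Fin m) (u : Vec m) (p : MvPolynomial (Fin m) ℝ) :
    eval u (reflPoly i p) = eval (reflFun m i u) p := by
  rw [reflPoly, map_sum, eval_eq']
  refine Finset.sum_congr rfl fun d _ => ?_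
  have hrefl :
      ∀ l, reflFun m i u l ^ d l = (if l = i then (-1) ^ d l else 1) * u l ^ d l := by
    intro l
    by_cases h : l = i
    · simp only [reflFun, h, if_true]; exact neg_pow (u i) (d i)
    · simp only [reflFun, h, if_false, one_mul]
  rw [eval_monomial, Finsupp.prod_fintype _ _ fun _ => pow_zero _, Finset.prod_congr rfl
    fun l _ => hrefl l, Finset.prod_mul_distrib, Finset.prod_ite_eq' Finset.univ i]
  simp only [Finset.mem_univ, if_true]
  ring

lemma coeff_reflPoly (i : Fin m) (d : Fin m →₀ ℕ) (p : MvPolynomial (Fin m) ℝ) :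
    coeff d (reflPoly i p) = (-1) ^ d i * coeff d p := by
  rw [reflPoly, coeff_sum, Finset.sum_eq_single d]
  · rw [coeff_monomial, if_pos rfl]
  · intro d' _ hd'; rw [coeff_monomial, if_neg hd']
  · intro hd; rw [notMem_support_iff.1 hd, mul_zero, coeff_monomial, if_pos rfl]

lemma neg_one_pow_eq_of_eval_reflFun {i : Fin m} {p : MvPolynomial (Fin m) ℝ} {s : ℝ}
    (h : ∀ u, eval (reflFun m i u) p = s * eval u p) {d : Fin m →₀ ℕ}
    (hd : d ∈ p.support) :
    (-1) ^ d i = s := by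
  have hrefl : reflPoly i p = C s * p :=
    MvPolynomial.funext fun u => by rw [eval_reflPoly, h, eval_mul, eval_C]
  have hcoeff := congrArg (coeff d) hrefl
  rw [coeff_reflPoly, coeff_C_mul] at hcoeff
  exact mul_right_cancel₀ (mem_support_iff.1 hd) hcoeff

theorem exists_eval_eq_prod_mul_eval_Phi (S : Finset (Fin m)) {p : MvPolynomial (Fin m) ℝ}
    {R : ℕ} (hp : ∀ i u, eval (reflFun m i u) p = (if i ∈ S then -1 else 1) * eval u p)
    (hdeg : p.totalDegree ≤ 2 * R + S.card) :
    ∃ q : MvPolynomial (Fin m) ℝ, q.totalDegree ≤ R ∧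
      ∀ u, eval u p = (∏ i ∈ S, u i) * eval (Phi m u) q := by
  have hpar : ∀ d ∈ p.support, ∀ i, d i = (if i ∈ S then 1 else 0) + 2 * (d i / 2) := by
    intro d hd i
    have hsign := neg_one_pow_eq_of_eval_reflFun (hp i) hd
    split_ifs at hsign ⊢
    · have := (neg_one_pow_eq_neg_one_iff_odd (by norm_num)).1 hsign
      rw [Nat.odd_iff] at this; omega
    · have := (neg_one_pow_eq_one_iff_even (by norm_num)).1 hsign
      rw [Nat.even_iff] at this; omega
  let half (d : Fin m →₀ ℕ) : Fin m →₀ ℕ := d.mapRange (· / 2) (Nat.zero_div 2)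
  refine ⟨∑ d ∈ p.support, monomial (half d) (coeff d p), ?_, fun u => ?_⟩
  · refine totalDegree_finsetSum_le fun d hd => (totalDegree_monomial_le _ _).trans ?_
    have hd_le := le_totalDegree hd
    have hcard : ∑ i, (if i ∈ S then 1 else 0) = S.card := by simp
    have hsum : ∑ i, d i = S.card + 2 * ∑ i, d i / 2 := by
      rw [Finset.sum_congr rfl fun i _ => hpar d hd i, Finset.sum_add_distrib, hcard,
        Finset.mul_sum]
    rw [Finsupp.sum_fintype d (fun _ e => e) fun _ => rfl] at hd_le
    rw [Finsupp.sum_fintype (half d) (fun _ => id) fun _ => rfl]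
    simp only [half, Finsupp.mapRange_apply, id]
    omega
  · rw [eval_eq' u p, map_sum, Finset.mul_sum]
    refine Finset.sum_congr rfl fun d hd => ?_
    have hsplit : ∀ i, u i ^ d i = (if i ∈ S then u i else 1) * Phi m u i ^ (d i / 2) := by
      intro i
      conv_lhs => rw [hpar d hd i]
      rw [pow_add, Phi, ← pow_mul]
      split_ifs <;> simp
    rw [eval_monomial, Finsupp.prod_fintype _ _ fun _ => pow_zero _,
      Finset.prod_congr rfl fun i _ => hsplit i, Finset.prod_mul_distrib, Finset.prod_ite_mem,
      Finset.univ_inter]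
    simp only [half, Finsupp.mapRange_apply]
    ring

lemma IsEven.apply_reflFun_basisTuple {β : Form m k} (hβ : IsEven m k β) (i : Fin m)
    (g : Fin k → Fin m) (x : Vec m) :
    β (reflFun m i x) (basisTuple g) =
      (∏ j, if g j = i then -1 else 1) * β x (basisTuple g) := by
  have hsq :
      (∏ j, if g j = i then (-1 : ℝ) else 1) * ∏ j, (if g j = i then -1 else 1) = 1 := by
    rw [← Finset.prod_mul_distrib]
    exact Finset.prod_eq_one fun j _ => by split_ifs <;> norm_num
  have h : (∏ j, if g j = i then (-1 : ℝ) else 1) * β (reflFun m i x) (basisTuple g) =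
      β x (basisTuple g) := by
    have h := congrArg (fun ω => ω (basisTuple g)) (congrFun (hβ i) x)
    simp only [reflPull, AlternatingMap.compLinearMap_apply, basisTuple, reflLin_single,
      AlternatingMap.map_smul_univ, smul_eq_mul] at h
    exact h
  rw [← h, ← mul_assoc, hsq, one_mul]

lemma exists_basisTuple_eq_prod_mul_eval_Phi {β : Form m k} {r : ℕ}
    (hβ : β ∈ PL m k (2 * r + k)) (hev : IsEven m k β) (g : Fin k → Fin m) :
    ∃ q : MvPolynomial (Fin m) ℝ, q.totalDegree ≤ r ∧
      ∀ u, β u (basisTuple g) = (∏ j, u (g j)) * eval (Phi m u) q := by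
  by_cases hg : Function.Injective g
  · obtain ⟨p, hp, hpβ⟩ := hβ (basisTuple g)
    have hcard : (Finset.univ.image g).card = k := by
      rw [Finset.card_image_of_injective _ hg, Finset.card_univ, Fintype.card_fin]
    have hdeg : (2 * r + k : ℤ) = ((2 * r + (Finset.univ.image g).card : ℕ) : ℤ) := by
      rw [hcard]; push_cast; rfl
    rw [hdeg, degLE_natCast_iff] at hp
    have hsign : ∀ i u, eval (reflFun m i u) p =
        (if i ∈ Finset.univ.image g then -1 else 1) * eval u p := by
      intro i u
      rw [← hpβ, ← hpβ, hev.apply_reflFun_basisTuple,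
        ← Finset.prod_image (f := fun l => if l = i then (-1 : ℝ) else 1) hg.injOn,
        Finset.prod_ite_eq']
    obtain ⟨q, hq, hpq⟩ := exists_eval_eq_prod_mul_eval_Phi _ hsign hp
    refine ⟨q, hq, fun u => ?_⟩
    rw [hpβ, hpq, Finset.prod_image hg.injOn]
  · refine ⟨0, by simp, fun u => ?_⟩
    obtain ⟨j, j', hjj', hne⟩ := Function.not_injective_iff.1 hg
    rw [map_zero, mul_zero]
    exact (β u).map_eq_zero_of_eq _ (by simp [basisTuple, hjj']) hne

lemma phiPull_surjOn (r : ℕ) :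
    Set.SurjOn (phiPull m k) (PL m k r) {β ∈ PL m k (2 * r + k) | IsEven m k β} := by
  rintro β ⟨hβ, hev⟩
  choose q hq hβq using exists_basisTuple_eq_prod_mul_eval_Phi hβ hev
  -- `c` cancels the factor `2 ^ k` of `dx_dPhi` and the `k!` of `sum_basisTuple_smul_dx`.
  set c : ℝ := ((2 : ℝ) ^ k * k.factorial)⁻¹
  refine ⟨fun y => ∑ g, eval y (q g) • c • dx g, sum_smul_mem_PL _ _ hq, ?_⟩
  funext u
  have hprod : ∀ g : Fin k → Fin m, ∏ j, 2 * u (g j) = 2 ^ k * ∏ j, u (g j) := fun g => by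
    rw [Finset.prod_mul_distrib, Finset.prod_const, Finset.card_univ, Fintype.card_fin]
  calc phiPull m k (fun y => ∑ g, eval y (q g) • c • dx g) u
      = ∑ g, (eval (Phi m u) (q g) * c * ∏ j, 2 * u (g j)) • dx g := by
        ext v
        simp only [phiPull, AlternatingMap.compLinearMap_apply, AlternatingMap.sum_apply,
          AlternatingMap.smul_apply, dx_dPhi, smul_eq_mul, mul_assoc]
    _ = (k.factorial : ℝ)⁻¹ • ∑ g, β u (basisTuple g) • dx g := by
        rw [Finset.smul_sum]
        refine Finset.sum_congr rfl fun g _ => ?_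
        rw [smul_smul, hβq, hprod]
        congr 1
        simp only [c]
        field_simp
    _ = β u := by
        rw [(β u).sum_basisTuple_smul_dx,
          inv_smul_smul₀ (by positivity : (k.factorial : ℝ) ≠ 0)]

theorem stmt6_general (n k r : ℕ) :
    Set.BijOn (phiPull (n + 1) k) (PL (n + 1) k (r : ℤ))
      {α ∈ PL (n + 1) k (2 * (r : ℤ) + k) | IsEven (n + 1) k α} ∧
    (∀ a b, phiPull (n + 1) k (a + b) = phiPull (n + 1) k a + phiPull (n + 1) k b) ∧
    (∀ (c : ℝ) a, phiPull (n + 1) k (c • a) = c • phiPull (n + 1) k a) :=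
  ⟨⟨fun _ hα => ⟨phiPull_mem_PL hα, isEven_phiPull _⟩, phiPull_injOn _, phiPull_surjOn r⟩,
    phiPull_add, phiPull_smul⟩

theorem stmt6 (n k r : ℕ) (hk : k ≤ n + 1) :
    Set.BijOn (phiPull (n + 1) k) (PL (n + 1) k (r : ℤ))
      {α ∈ PL (n + 1) k (2 * (r : ℤ) + k) | IsEven (n + 1) k α} ∧
    (∀ a b, phiPull (n + 1) k (a + b) = phiPull (n + 1) k a + phiPull (n + 1) k b) ∧
    (∀ (c : ℝ) a, phiPull (n + 1) k (c • a) = c • phiPull (n + 1) k a) :=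
  stmt6_general n k r
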